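/- Let 0 < σ₁ < σ₂, let g₁, g₂ be the densities of N(0, σ₁²) and N(0, σ₂²), and let t = √(ln(σ₂/σ₁) / (σ₂² − σ₁²)). Then the variational (L¹) distance between the two densities equals ∫_{−∞}^{∞} |g₁(x) − g₂(x)| dx = 2·erf(σ₂ t) − 2·erf(σ₁ t), where erf(x) = (2/√π) ∫₀ˣ exp(−u²) du is the error function. -/

import Mathlib

open Real MeasureTheory

/-- The error function `erf(x) = (2/√π) ∫₀ˣ exp(−u²) du`. -/
noncomputable def errorFunction (x : ℝ) : ℝ :=
  (2 / Real.sqrt π) * ∫ u in (0 : ℝ)..x, Real.exp (-(u ^ 2))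

/-!
Two centred Gaussian densities with variances `v₁ < v₂` cross exactly at `|x| = x₀`, where
`x₀² = v₁ v₂ log (v₂ / v₁) / (v₂ - v₁)`: comparing log-densities reduces `g₂ ≤ g₁` to a linear
inequality in `x²`. So `g₁ - g₂` is nonnegative on `[-x₀, x₀]` and nonpositive outside, and since both
densities have total mass one, `∫ |g₁ - g₂| = 2 ∫_{-x₀}^{x₀} (g₁ - g₂)`. A Gaussian integral over a
symmetric interval is an error function value after the substitution `u = x / √(2v)`; with
`v = σ²` one gets `x₀ = √2 σ₁ σ₂ t`, hence the arguments `σ₂ t` and `σ₁ t`.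
-/

open ProbabilityTheory
open scoped NNReal

theorem integral_abs_sub_eq_two_mul_setIntegral {α : Type*} [MeasurableSpace α] {μ : Measure α}
    {f g : α → ℝ} {s : Set α} (hf : Integrable f μ) (hg : Integrable g μ)
    (hfg : ∫ x, f x ∂μ = ∫ x, g x ∂μ) (hs : MeasurableSet s)
    (hs_le : ∀ x ∈ s, g x ≤ f x) (hsc_le : ∀ x ∈ sᶜ, f x ≤ g x) :
    ∫ x, |f x - g x| ∂μ = 2 * ∫ x in s, (f x - g x) ∂μ := by
  have h_zero : ∫ x in s, (f x - g x) ∂μ + ∫ x in sᶜ, (f x - g x) ∂μ = 0 := by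
    rw [integral_add_compl (f := fun x => f x - g x) hs (hf.sub hg), integral_sub hf hg, hfg,
      sub_self]
  have h_on : ∫ x in s, |f x - g x| ∂μ = ∫ x in s, (f x - g x) ∂μ :=
    setIntegral_congr_fun hs fun x hx => abs_of_nonneg (sub_nonneg.2 (hs_le x hx))
  have h_off : ∫ x in sᶜ, |f x - g x| ∂μ = -∫ x in sᶜ, (f x - g x) ∂μ := by
    rw [← integral_neg]
    exact setIntegral_congr_fun hs.compl fun x hx => abs_of_nonpos (sub_nonpos.2 (hsc_le x hx))
  rw [← integral_add_compl (f := fun x => |f x - g x|) hs (hf.sub hg).abs, h_on, h_off]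
  linarith

theorem log_gaussianPDFReal (μ : ℝ) {v : ℝ≥0} (hv : v ≠ 0) (x : ℝ) :
    log (gaussianPDFReal μ v x) = -(log (2 * π) + log v) / 2 - (x - μ) ^ 2 / (2 * v) := by
  have hv' : (0 : ℝ) < v := by positivity
  rw [gaussianPDFReal, log_mul (by positivity) (exp_pos _).ne', log_inv, log_exp,
    log_sqrt (by positivity), log_mul (by positivity) hv'.ne']
  ring

noncomputable def gaussianCrossingPoint (v₁ v₂ : ℝ≥0) : ℝ :=
  √(v₁ * v₂ * log (v₂ / v₁) / (v₂ - v₁))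

theorem gaussianPDFReal_le_gaussianPDFReal_iff (μ : ℝ) {v₁ v₂ : ℝ≥0} (hv₁ : 0 < v₁)
    (hv : v₁ < v₂) (x : ℝ) :
    gaussianPDFReal μ v₂ x ≤ gaussianPDFReal μ v₁ x ↔ |x - μ| ≤ gaussianCrossingPoint v₁ v₂ := by
  have h₁ : (0 : ℝ) < v₁ := hv₁
  have h₂ : (v₁ : ℝ) < v₂ := hv
  have h₂' : (0 : ℝ) < v₂ := h₁.trans h₂
  rw [← log_le_log_iff (gaussianPDFReal_pos _ _ _ (hv₁.trans hv).ne')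
    (gaussianPDFReal_pos _ _ _ hv₁.ne'), log_gaussianPDFReal _ (hv₁.trans hv).ne',
    log_gaussianPDFReal _ hv₁.ne', gaussianCrossingPoint,
    le_sqrt (abs_nonneg _) (div_nonneg (mul_nonneg (by positivity)
      (log_nonneg ((one_le_div h₁).2 h₂.le))) (sub_nonneg.2 h₂.le)),
    sq_abs, log_div h₂'.ne' h₁.ne', le_div_iff₀ (sub_pos.2 h₂)]
  have h_cleared : ((x - μ) ^ 2 / (2 * v₁) - (x - μ) ^ 2 / (2 * v₂)) * (2 * v₁ * v₂)
      = (x - μ) ^ 2 * (v₂ - v₁) := by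
    field_simp
  constructor <;> intro h <;> nlinarith [mul_pos h₁ h₂']

theorem errorFunction_eq_integral_symm (s : ℝ) :
    errorFunction s = (√π)⁻¹ * ∫ u in -s..s, exp (-u ^ 2) := by
  have hcont : Continuous fun u : ℝ => exp (-u ^ 2) := by fun_prop
  have h_even : ∫ u in -s..0, exp (-u ^ 2) = ∫ u in 0..s, exp (-u ^ 2) := by
    have := intervalIntegral.integral_comp_neg (a := 0) (b := s) fun u => exp (-u ^ 2)
    simp only [neg_sq, neg_zero] at this
    exact this.symm
  rw [← intervalIntegral.integral_add_adjacent_intervals (hcont.intervalIntegrable _ 0)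
    (hcont.intervalIntegrable 0 _), h_even, errorFunction]
  ring

theorem integral_gaussianPDFReal_symm_interval {v : ℝ≥0} (hv : v ≠ 0) (a : ℝ) :
    ∫ x in -a..a, gaussianPDFReal 0 v x = errorFunction (a / √(2 * v)) := by
  set c := √(2 * v) with hc
  have hc_pos : 0 < c := by positivity
  have h_scaled : ∀ x, gaussianPDFReal 0 v x = (√(2 * π * v))⁻¹ * exp (-(x / c) ^ 2) := by
    intro x
    rw [gaussianPDFReal, div_pow, hc, sq_sqrt (by positivity), sub_zero, neg_div]
  simp_rw [h_scaled]
  rw [intervalIntegral.integral_const_mul,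
    intervalIntegral.integral_comp_div (fun u => exp (-u ^ 2)) hc_pos.ne', neg_div,
    errorFunction_eq_integral_symm, smul_eq_mul]
  have h_norm : √(2 * π * v) = √π * c := by
    rw [hc, ← sqrt_mul pi_pos.le]
    ring_nf
  rw [h_norm]
  field_simp

theorem integral_abs_sub_gaussianPDFReal {v₁ v₂ : ℝ≥0} (hv₁ : 0 < v₁) (hv : v₁ < v₂) :
    ∫ x, |gaussianPDFReal 0 v₁ x - gaussianPDFReal 0 v₂ x| =
      2 * errorFunction (gaussianCrossingPoint v₁ v₂ / √(2 * v₁))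
        - 2 * errorFunction (gaussianCrossingPoint v₁ v₂ / √(2 * v₂)) := by
  set x₀ := gaussianCrossingPoint v₁ v₂
  have hv₂ : v₂ ≠ 0 := (hv₁.trans hv).ne'
  have hx₀ : 0 ≤ x₀ := sqrt_nonneg _
  have h_cross (x : ℝ) :
      gaussianPDFReal 0 v₂ x ≤ gaussianPDFReal 0 v₁ x ↔ x ∈ Set.Icc (-x₀) x₀ := by
    rw [gaussianPDFReal_le_gaussianPDFReal_iff 0 hv₁ hv, sub_zero, Set.mem_Icc, abs_le]
  rw [integral_abs_sub_eq_two_mul_setIntegral (integrable_gaussianPDFReal 0 _)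
      (integrable_gaussianPDFReal 0 _)
      (by rw [integral_gaussianPDFReal_eq_one 0 hv₁.ne', integral_gaussianPDFReal_eq_one 0 hv₂])
      measurableSet_Icc (fun x hx => (h_cross x).2 hx)
      (fun x hx => (not_le.1 (mt (h_cross x).1 hx)).le),
    integral_Icc_eq_integral_Ioc, ← intervalIntegral.integral_of_le (by linarith),
    intervalIntegral.integral_sub (integrable_gaussianPDFReal 0 _).intervalIntegrable
      (integrable_gaussianPDFReal 0 _).intervalIntegrable,
    integral_gaussianPDFReal_symm_interval hv₁.ne', integral_gaussianPDFReal_symm_interval hv₂]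
  ring

theorem gaussianPDFReal_zero_toNNReal_sq {σ : ℝ} (hσ : 0 ≤ σ) (x : ℝ) :
    gaussianPDFReal 0 (σ ^ 2).toNNReal x = (σ * √(2 * π))⁻¹ * exp (-x ^ 2 / (2 * σ ^ 2)) := by
  rw [gaussianPDFReal, Real.coe_toNNReal _ (sq_nonneg σ), sub_zero, mul_comm σ,
    sqrt_mul (by positivity), sqrt_sq hσ]

/-- For `0 < σ₁ < σ₂` and `t = √(ln(σ₂/σ₁)/(σ₂² − σ₁²))`, the L¹
(variational) distance between the densities of `N(0,σ₁²)` and `N(0,σ₂²)` equals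
`2 erf(σ₂ t) − 2 erf(σ₁ t)`. -/
theorem variational_distance_gaussians (σ₁ σ₂ : ℝ) (h1 : 0 < σ₁) (h12 : σ₁ < σ₂)
    (g₁ g₂ : ℝ → ℝ)
    (hg₁ : ∀ x, g₁ x = (σ₁ * Real.sqrt (2 * π))⁻¹ * Real.exp (-(x ^ 2) / (2 * σ₁ ^ 2)))
    (hg₂ : ∀ x, g₂ x = (σ₂ * Real.sqrt (2 * π))⁻¹ * Real.exp (-(x ^ 2) / (2 * σ₂ ^ 2)))
    (t : ℝ) (ht : t = Real.sqrt (Real.log (σ₂ / σ₁) / (σ₂ ^ 2 - σ₁ ^ 2))) :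
    ∫ x : ℝ, |g₁ x - g₂ x| =
      2 * errorFunction (σ₂ * t) - 2 * errorFunction (σ₁ * t) := by
  have h2 : 0 < σ₂ := h1.trans h12
  have hg₁' : g₁ = gaussianPDFReal 0 (σ₁ ^ 2).toNNReal :=
    funext fun x => (hg₁ x).trans (gaussianPDFReal_zero_toNNReal_sq h1.le x).symm
  have hg₂' : g₂ = gaussianPDFReal 0 (σ₂ ^ 2).toNNReal :=
    funext fun x => (hg₂ x).trans (gaussianPDFReal_zero_toNNReal_sq h2.le x).symm
  have h_var : (σ₁ ^ 2).toNNReal < (σ₂ ^ 2).toNNReal :=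
    (Real.toNNReal_lt_toNNReal_iff_of_nonneg (sq_nonneg _)).2
      (pow_lt_pow_left₀ h12 h1.le two_ne_zero)
  have h_std (σ : ℝ) (hσ : 0 ≤ σ) : √(2 * ((σ ^ 2).toNNReal : ℝ)) = √2 * σ := by
    rw [Real.coe_toNNReal _ (sq_nonneg _), sqrt_mul zero_le_two, sqrt_sq hσ]
  have h_crossing :
      gaussianCrossingPoint (σ₁ ^ 2).toNNReal (σ₂ ^ 2).toNNReal = √2 * σ₁ * σ₂ * t := by
    rw [gaussianCrossingPoint, Real.coe_toNNReal _ (sq_nonneg _),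
      Real.coe_toNNReal _ (sq_nonneg _), ← div_pow, log_pow, ht,
      ← sqrt_sq (by positivity : 0 ≤ √2 * σ₁ * σ₂), ← sqrt_mul (sq_nonneg _), mul_pow, mul_pow,
      sq_sqrt zero_le_two]
    congr 1
    push_cast
    ring
  rw [hg₁', hg₂', integral_abs_sub_gaussianPDFReal (Real.toNNReal_pos.2 (pow_pos h1 2)) h_var,
    h_crossing, h_std σ₁ h1.le, h_std σ₂ h2.le]
  congr 3 <;> field_simp
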